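/- Let n ≥ 1 and let U, V be 2^n × 2^n unitary matrices. Then C_LHST(U,V) = 0 if and only if there exists φ ∈ ℝ such that V = e^{iφ} U, i.e., the local Hilbert-Schmidt cost vanishes exactly when U and V agree up to a global phase. -/

import Mathlib

open Matrix Kronecker Complex

noncomputable section

/-- The Hilbert-Schmidt test cost `C_HST(U,V) = 1 - |Tr(V†U)|²/d²` for `d × d` matrices. -/
def CHSTd (d : ℕ) (U V : Matrix (Fin d) (Fin d) ℂ) : ℝ :=
  1 - ‖(Vᴴ * U).trace‖ ^ 2 / (d : ℝ) ^ 2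

/-- The Hilbert-Schmidt test cost for unitaries on `n` qubits (`d = 2^n`). -/
def CHST (n : ℕ) (U V : Matrix (Fin n → Fin 2) (Fin n → Fin 2) ℂ) : ℝ :=
  1 - ‖(Vᴴ * U).trace‖ ^ 2 / ((2 : ℝ) ^ n) ^ 2

/-- The local channel `E_j(ρ) = Tr_{j̄}[ W (ρ_(j) ⊗ I/2^(n-1)) W† ]`, where `ρ` is placed on
qubit `j`, the maximally mixed state on the other qubits, and the partial trace is over all
qubits except `j`.  (The sum over `r` double-counts the assignments of the qubits other than
`j`, whence the extra factor `1/2`.) -/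
def Ej (n : ℕ) (j : Fin n) (W : Matrix (Fin n → Fin 2) (Fin n → Fin 2) ℂ)
    (ρ : Matrix (Fin 2) (Fin 2) ℂ) : Matrix (Fin 2) (Fin 2) ℂ :=
  Matrix.of fun a b =>
    (1 / 2 ^ (n - 1) : ℂ) * (1 / 2) *
      ∑ r : Fin n → Fin 2, ∑ s : Fin n → Fin 2, ∑ t : Fin n → Fin 2,
        (if Function.update s j 0 = Function.update t j 0 then
          W (Function.update r j a) s * ρ (s j) (t j) * star (W (Function.update r j b) t)
        else 0)

/-- The two-qubit maximally entangled state `|Φ₂⁺⟩ = (|00⟩+|11⟩)/√2`. -/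
def phi2 : (Fin 2 × Fin 2) → ℂ := fun p => if p.1 = p.2 then ((1 / Real.sqrt 2 : ℝ) : ℂ) else 0

/-- The projector `|Φ₂⁺⟩⟨Φ₂⁺|`. -/
def phi2Proj : Matrix (Fin 2 × Fin 2) (Fin 2 × Fin 2) ℂ :=
  Matrix.of fun p q => if p.1 = p.2 ∧ q.1 = q.2 then (1 / 2 : ℂ) else 0

/-- `(E ⊗ id)(ρ)` for a map `E` on one-qubit matrices and a two-qubit matrix `ρ`. -/
def tensorId (E : Matrix (Fin 2) (Fin 2) ℂ → Matrix (Fin 2) (Fin 2) ℂ)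
    (ρ : Matrix (Fin 2 × Fin 2) (Fin 2 × Fin 2) ℂ) :
    Matrix (Fin 2 × Fin 2) (Fin 2 × Fin 2) ℂ :=
  Matrix.of fun p q => ∑ a : Fin 2, ∑ b : Fin 2,
    ρ (a, p.2) (b, q.2) * E (Matrix.single a b 1) p.1 q.1

/-- The entanglement fidelity `F_e^(j) = ⟨Φ₂⁺|(E_j ⊗ id)(|Φ₂⁺⟩⟨Φ₂⁺|)|Φ₂⁺⟩`
(as a complex number), with `W = U V†`. -/
def FeC (n : ℕ) (j : Fin n) (U V : Matrix (Fin n → Fin 2) (Fin n → Fin 2) ℂ) : ℂ :=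
  star phi2 ⬝ᵥ (tensorId (Ej n j (U * Vᴴ)) phi2Proj).mulVec phi2

/-- The entanglement fidelity `F_e^(j)` (a real number). -/
def Fe (n : ℕ) (j : Fin n) (U V : Matrix (Fin n → Fin 2) (Fin n → Fin 2) ℂ) : ℝ :=
  (FeC n j U V).re

/-- The local Hilbert-Schmidt cost for qubit `j`: `C_LHST^(j)(U,V) = 1 - F_e^(j)`. -/
def CLHSTj (n : ℕ) (j : Fin n) (U V : Matrix (Fin n → Fin 2) (Fin n → Fin 2) ℂ) : ℝ :=
  1 - Fe n j U V

/-- The local Hilbert-Schmidt cost `C_LHST(U,V) = (1/n) Σ_j C_LHST^(j)(U,V)`. -/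
def CLHST (n : ℕ) (U V : Matrix (Fin n → Fin 2) (Fin n → Fin 2) ℂ) : ℝ :=
  (1 / n : ℝ) * ∑ j : Fin n, CLHSTj n j U V

end

/-!
Write `W = U V†` and `W^{ab}(r, s) = W(r[j ↦ a], s[j ↦ b])` for a qubit `j`. Then
`F_e^(j) = 2^{-(n+3)} Σ_{r,s} |W^{00} + W^{11}|²`. Unitarity gives
`Σ_{a,b} Σ_{r,s} |W^{ab}|² = 4 · 2^n`, so by the parallelogram law
`2^{n+3} (1 - F_e^(j)) = Σ_{r,s} (2 |W^{01}|² + 2 |W^{10}|² + |W^{00} - W^{11}|²)` is a sum of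
squares. The cost therefore vanishes iff for every qubit `j` the matrix `W` has no entries between
basis states that differ at `j` and is unchanged by flipping `j` on both sides, i.e. `W = c • 1`;
unitarity of `U` and `V` then makes `V = c̄ • U` with `|c| = 1`.
-/

open Function Finset

section FunctionUpdate

variable {ι β M : Type*} [DecidableEq ι] [AddCommMonoid M]

lemma eq_update_of_update_eq_update {j : ι} {b : β} {s t : ι → β}
    (h : update t j b = update s j b) : t = update s j (t j) := by
  simpa using congrArg (update · j (t j)) h

lemma update_eq_update_iff_update_eq_update {j : ι} (a b : β) {s t : ι → β} :
    update t j a = update s j a ↔ update t j b = update s j b := by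
  constructor <;> intro h <;> simpa using congrArg (update · j _) h

variable [Fintype ι] [Fintype β] [DecidableEq β]

lemma sum_ite_update_eq (j : ι) (b : β) (s : ι → β) (g : (ι → β) → M) :
    ∑ t, (if update s j b = update t j b then g t else 0) = ∑ c, g (update s j c) := by
  rw [← sum_filter]
  refine sum_nbij' (· j) (update s j ·) ?_ ?_ ?_ ?_ ?_
  · simp
  · simp
  · intro t ht
    exact (eq_update_of_update_eq_update (mem_filter.1 ht).2.symm).symm
  · simp
  · intro t ht
    rw [← eq_update_of_update_eq_update (mem_filter.1 ht).2.symm]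

lemma sum_comp_update (j : ι) (a : β) (g : (ι → β) → M) :
    ∑ r, g (update r j a) = Fintype.card β • ∑ u with u j = a, g u := by
  rw [← sum_fiberwise univ (· j), ← card_univ, ← sum_const]
  refine sum_congr rfl fun b _ => ?_
  refine sum_nbij' (update · j a) (update · j b) ?_ ?_ ?_ ?_ (fun _ _ => rfl) <;>
    intro u hu <;> simp_all

lemma sum_sum_comp_update (j : ι) (g : (ι → β) → M) :
    ∑ a, ∑ r, g (update r j a) = Fintype.card β • ∑ u, g u := by
  simp_rw [sum_comp_update, ← smul_sum, sum_fiberwise]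

lemma sum_sum_sum_sum_comp_update (j : ι) (g : (ι → β) → (ι → β) → M) :
    ∑ a, ∑ r, ∑ b, ∑ s, g (update r j a) (update s j b)
      = Fintype.card β • Fintype.card β • ∑ u, ∑ v, g u v := by
  simp only [sum_sum_comp_update]
  rw [sum_sum_comp_update j (fun u => Fintype.card β • ∑ v, g u v), ← smul_sum]

end FunctionUpdate

lemma eq_of_forall_update_eq {ι β α : Type*} [DecidableEq ι] [Fintype ι] (f : (ι → β) → α)
    (hf : ∀ r j a, f (update r j a) = f r) (r z : ι → β) : f r = f z := by
  have hpiecewise : ∀ S : Finset ι, f (S.piecewise z r) = f r := by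
    intro S
    induction S using Finset.induction_on with
    | empty => simp
    | insert j S _ ih => rw [piecewise_insert, hf, ih]
  simpa using (hpiecewise univ).symm

lemma Matrix.eq_smul_one_of_forall_update {ι β R : Type*} [DecidableEq ι] [Fintype ι]
    [DecidableEq β] [Semiring R] (W : Matrix (ι → β) (ι → β) R)
    (hoff : ∀ j u v, u j ≠ v j → W u v = 0)
    (hdiag : ∀ j r a b, W (update r j a) (update r j a) = W (update r j b) (update r j b))
    (z : ι → β) : W = W z z • 1 := by
  ext u v
  by_cases huv : u = v
  · subst huv
    simpa using eq_of_forall_update_eq (fun r => W r r)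
      (fun r j a => by rw [hdiag j r a (r j), update_eq_self]) u z
  · obtain ⟨j, hj⟩ := Function.ne_iff.1 huv
    simp [hoff j u v hj, one_apply_ne huv]

lemma Matrix.sum_sum_normSq_of_mem_unitaryGroup {m : Type*} [Fintype m] [DecidableEq m]
    {W : Matrix m m ℂ} (hW : W ∈ unitaryGroup m ℂ) :
    ∑ u, ∑ v, normSq (W u v) = Fintype.card m := by
  have hrow : ∀ u, ∑ v, normSq (W u v) = 1 := by
    intro u
    have h := congrFun (congrFun (mem_unitaryGroup_iff.1 hW) u) u
    simp only [mul_apply, star_apply, RCLike.star_def, mul_conj, one_apply_eq] at h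
    exact_mod_cast h
  simp [hrow]

lemma Matrix.exists_mul_conjTranspose_eq_smul_one_iff {m : Type*} [Fintype m] [DecidableEq m]
    [Nonempty m] {U V : Matrix m m ℂ} (hU : U ∈ unitaryGroup m ℂ) (hV : V ∈ unitaryGroup m ℂ) :
    (∃ c : ℂ, U * Vᴴ = c • 1) ↔ ∃ φ : ℝ, V = exp (I * φ) • U := by
  have hUU : Uᴴ * U = 1 := mem_unitaryGroup_iff'.1 hU
  have hUU' : U * Uᴴ = 1 := mem_unitaryGroup_iff.1 hU
  constructor
  · rintro ⟨c, hc⟩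
    have hVc : V = star c • U := by
      have : Vᴴ = c • Uᴴ := by
        rw [← one_mul Vᴴ, ← hUU, mul_assoc, hc, Matrix.mul_smul, mul_one]
      simpa using congrArg conjTranspose this
    have hnorm : ‖star c‖ = 1 := by
      have h := mem_unitaryGroup_iff.1 hV
      rw [hVc, star_smul, smul_mul_smul, mem_unitaryGroup_iff.1 hU] at h
      obtain ⟨i⟩ := ‹Nonempty m›
      have hi := congrFun (congrFun h i) i
      simp only [smul_apply, one_apply_eq, smul_eq_mul, mul_one, RCLike.star_def, mul_conj,
        normSq_eq_norm_sq, norm_conj] at hi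
      rw [norm_star]
      exact (pow_eq_one_iff_of_nonneg (norm_nonneg c) two_ne_zero).1 (by exact_mod_cast hi)
    refine ⟨arg (star c), ?_⟩
    rw [hVc]
    congr 1
    conv_lhs => rw [← norm_mul_exp_arg_mul_I (star c)]
    rw [hnorm, ofReal_one, one_mul, mul_comm]
  · rintro ⟨φ, rfl⟩
    exact ⟨star (exp (I * φ)), by rw [conjTranspose_smul, Matrix.mul_smul, hUU']⟩

section Qubits

variable {n : ℕ}

lemma Ej_single_apply (j : Fin n) (W : Matrix (Fin n → Fin 2) (Fin n → Fin 2) ℂ)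
    (a b : Fin 2) :
    Ej n j W (single a b 1) a b = (1 / 2 ^ (n + 1) : ℂ) *
      ∑ r, ∑ s, W (update r j a) (update s j a) * star (W (update r j b) (update s j b)) := by
  have hinner : ∀ r s : Fin n → Fin 2,
      ∑ t : Fin n → Fin 2, (if update s j 0 = update t j 0 then
          W (update r j a) s * single a b 1 (s j) (t j) * star (W (update r j b) t) else 0)
        = if s j = a then W (update r j a) s * star (W (update r j b) (update s j b)) else 0 := by
    intro r s
    rw [sum_ite_update_eq]
    by_cases h : s j = a
    · simp [h, single_apply]
    · simp [h, Ne.symm h]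
  have hfilter : ∀ r : Fin n → Fin 2,
      ∑ s : Fin n → Fin 2,
          (if s j = a then W (update r j a) s * star (W (update r j b) (update s j b)) else 0)
        = 1 / 2 * ∑ s,
            W (update r j a) (update s j a) * star (W (update r j b) (update s j b)) := by
    intro r
    have h := sum_comp_update j a (fun s => W (update r j a) s *
      star (W (update r j b) (update s j b)))
    simp only [update_idem, Fintype.card_fin] at h
    rw [← sum_filter, h, nsmul_eq_mul]
    ring
  -- `j : Fin n` gives `n ≥ 1`, so the truncated `n - 1` in `Ej` is exact.
  obtain ⟨m, rfl⟩ : ∃ m, n = m + 1 := Nat.exists_eq_add_one_of_ne_zero j.pos.ne'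
  simp only [Ej, of_apply, hinner, hfilter, ← mul_sum]
  simp only [add_tsub_cancel_right, one_div, RCLike.star_def]
  ring

lemma star_phi2_dotProduct_tensorId_mulVec_phi2
    (E : Matrix (Fin 2) (Fin 2) ℂ → Matrix (Fin 2) (Fin 2) ℂ) :
    star phi2 ⬝ᵥ (tensorId E phi2Proj).mulVec phi2
      = 1 / 4 * ∑ a, ∑ b, E (single a b 1) a b := by
  have hsqrt : ((√2 : ℝ) : ℂ)⁻¹ * ((√2 : ℝ) : ℂ)⁻¹ = 1 / 2 := by
    rw [← mul_inv, ← ofReal_mul, Real.mul_self_sqrt zero_le_two]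
    norm_num
  simp only [dotProduct, mulVec, tensorId, phi2, phi2Proj, of_apply, Pi.star_apply,
    Fintype.sum_prod_type, Fin.sum_univ_two, one_div, ofReal_inv]
  simp only [↓reduceIte, star_inv₀, RCLike.star_def, conj_ofReal, and_self, one_ne_zero,
    and_false, zero_mul, add_zero, and_true, zero_ne_one, zero_add, mul_zero, star_zero]
  linear_combination (E (single 0 0 1) 0 0 + E (single 0 1 1) 0 1 + E (single 1 0 1) 1 0
    + E (single 1 1 1) 1 1) / 2 * hsqrt

lemma FeC_eq (j : Fin n) (U V : Matrix (Fin n → Fin 2) (Fin n → Fin 2) ℂ) :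
    FeC n j U V = (∑ r, ∑ s, (normSq ((U * Vᴴ) (update r j 0) (update s j 0)
      + (U * Vᴴ) (update r j 1) (update s j 1)) : ℂ)) / 2 ^ (n + 3) := by
  simp only [FeC, star_phi2_dotProduct_tensorId_mulVec_phi2, Ej_single_apply, ← mul_conj,
    map_add, Complex.star_def, Fin.sum_univ_two, mul_add, add_mul, sum_add_distrib]
  ring

lemma Fe_eq (j : Fin n) (U V : Matrix (Fin n → Fin 2) (Fin n → Fin 2) ℂ) :
    Fe n j U V = (∑ r, ∑ s, normSq ((U * Vᴴ) (update r j 0) (update s j 0)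
      + (U * Vᴴ) (update r j 1) (update s j 1))) / 2 ^ (n + 3) := by
  rw [Fe, FeC_eq]
  norm_cast

def localDefect (j : Fin n) (W : Matrix (Fin n → Fin 2) (Fin n → Fin 2) ℂ) : ℝ :=
  ∑ r, ∑ s, (2 * (normSq (W (update r j 0) (update s j 1))
      + normSq (W (update r j 1) (update s j 0)))
    + normSq (W (update r j 0) (update s j 0) - W (update r j 1) (update s j 1)))

lemma CLHSTj_eq_localDefect_div (j : Fin n) {U V : Matrix (Fin n → Fin 2) (Fin n → Fin 2) ℂ}
    (hW : U * Vᴴ ∈ unitaryGroup (Fin n → Fin 2) ℂ) :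
    CLHSTj n j U V = localDefect j (U * Vᴴ) / 2 ^ (n + 3) := by
  set W := U * Vᴴ
  have hblocks := sum_sum_sum_sum_comp_update j (fun u v => normSq (W u v))
  simp only [sum_sum_normSq_of_mem_unitaryGroup hW, Fin.sum_univ_two, sum_add_distrib,
    Fintype.card_fin, Fintype.card_fun, nsmul_eq_mul] at hblocks
  have htotal : ∑ r, ∑ s, normSq (W (update r j 0) (update s j 0)
      + W (update r j 1) (update s j 1)) + localDefect j W = 2 ^ (n + 3) := by
    have hparallelogram : ∀ r s : Fin n → Fin 2,
        normSq (W (update r j 0) (update s j 0) + W (update r j 1) (update s j 1))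
          + (2 * (normSq (W (update r j 0) (update s j 1))
            + normSq (W (update r j 1) (update s j 0)))
          + normSq (W (update r j 0) (update s j 0) - W (update r j 1) (update s j 1)))
        = 2 * (normSq (W (update r j 0) (update s j 0)) + normSq (W (update r j 1) (update s j 0))
          + normSq (W (update r j 0) (update s j 1))
          + normSq (W (update r j 1) (update s j 1))) := by
      intro r s
      rw [normSq_add, normSq_sub]
      ring
    simp only [localDefect, ← sum_add_distrib, hparallelogram, ← mul_sum]
    simp only [sum_add_distrib]
    push_cast at hblocks
    rw [pow_add]
    linarith
  rw [CLHSTj, Fe_eq]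
  field_simp
  linarith

lemma localDefect_eq_zero_iff (j : Fin n) (W : Matrix (Fin n → Fin 2) (Fin n → Fin 2) ℂ) :
    localDefect j W = 0 ↔ ∀ r s, W (update r j 0) (update s j 1) = 0 ∧
      W (update r j 1) (update s j 0) = 0 ∧
      W (update r j 0) (update s j 0) = W (update r j 1) (update s j 1) := by
  have hpair (x y : ℂ) : 0 ≤ 2 * (normSq x + normSq y) :=
    mul_nonneg zero_le_two (add_nonneg (normSq_nonneg x) (normSq_nonneg y))
  have hterm (x y z : ℂ) : 0 ≤ 2 * (normSq x + normSq y) + normSq z :=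
    add_nonneg (hpair x y) (normSq_nonneg z)
  have hterm_eq_zero (x y z : ℂ) :
      2 * (normSq x + normSq y) + normSq z = 0 ↔ x = 0 ∧ y = 0 ∧ z = 0 := by
    rw [add_eq_zero_iff_of_nonneg (hpair x y) (normSq_nonneg z), mul_eq_zero,
      add_eq_zero_iff_of_nonneg (normSq_nonneg x) (normSq_nonneg y)]
    simp [and_assoc]
  simp only [localDefect,
    sum_eq_zero_iff_of_nonneg fun _ _ => sum_nonneg fun _ _ => hterm _ _ _,
    sum_eq_zero_iff_of_nonneg fun _ _ => hterm _ _ _, hterm_eq_zero, mem_univ, true_imp_iff,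
    sub_eq_zero]

lemma localDefect_nonneg (j : Fin n) (W : Matrix (Fin n → Fin 2) (Fin n → Fin 2) ℂ) :
    0 ≤ localDefect j W :=
  sum_nonneg fun _ _ => sum_nonneg fun _ _ => add_nonneg
    (mul_nonneg zero_le_two (add_nonneg (normSq_nonneg _) (normSq_nonneg _))) (normSq_nonneg _)

lemma forall_localDefect_eq_zero_iff (W : Matrix (Fin n → Fin 2) (Fin n → Fin 2) ℂ) :
    (∀ j, localDefect j W = 0) ↔ ∃ c : ℂ, W = c • 1 := by
  simp only [localDefect_eq_zero_iff]
  constructor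
  · intro h
    refine ⟨_, eq_smul_one_of_forall_update W (fun j u v huv => ?_) (fun j r a b => ?_) 0⟩
    · have hblock : ∀ a b : Fin 2, a ≠ b → W (update u j a) (update v j b) = 0 := by
        intro a b hab
        fin_cases a <;> fin_cases b <;> simp_all
      simpa using hblock (u j) (v j) huv
    · fin_cases a <;> fin_cases b <;> simp [(h j r r).2.2]
  · rintro ⟨c, rfl⟩ j r s
    have hne : ∀ a b : Fin 2, a ≠ b → update r j a ≠ update s j b := fun a b hab h =>
      hab (by simpa using congrFun h j)
    simp [one_apply, hne, update_eq_update_iff_update_eq_update (s := s) (t := r) 0 1]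

lemma CLHST_eq_zero_iff {U V : Matrix (Fin n → Fin 2) (Fin n → Fin 2) ℂ}
    (h : ∀ j, 0 ≤ CLHSTj n j U V) : CLHST n U V = 0 ↔ ∀ j, CLHSTj n j U V = 0 := by
  rcases n.eq_zero_or_pos with rfl | hn
  · simp [CLHST]
  · rw [CLHST, mul_eq_zero, sum_eq_zero_iff_of_nonneg fun j _ => h j]
    simp [hn.ne']

end Qubits

theorem stmt1 (n : ℕ)
    (U V : Matrix (Fin n → Fin 2) (Fin n → Fin 2) ℂ)
    (hU : U ∈ Matrix.unitaryGroup (Fin n → Fin 2) ℂ)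
    (hV : V ∈ Matrix.unitaryGroup (Fin n → Fin 2) ℂ) :
    CLHST n U V = 0 ↔ ∃ φ : ℝ, V = Complex.exp (Complex.I * φ) • U := by
  have hW : U * Vᴴ ∈ unitaryGroup (Fin n → Fin 2) ℂ := mul_mem hU (Unitary.star_mem hV)
  have hcost (j : Fin n) := CLHSTj_eq_localDefect_div j hW
  have hcost_nonneg (j : Fin n) : 0 ≤ CLHSTj n j U V := by
    rw [hcost]
    exact div_nonneg (localDefect_nonneg j _) (by positivity)
  simp only [CLHST_eq_zero_iff hcost_nonneg, hcost, div_eq_zero_iff, pow_eq_zero_iff',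
    OfNat.ofNat_ne_zero, false_and, or_false]
  rw [forall_localDefect_eq_zero_iff, exists_mul_conjTranspose_eq_smul_one_iff hU hV]
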